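/- arXiv:0806.4471 — 2 statements merged into one kernel-verified Lean document; each statement's English description precedes it below -/
import Mathlib

section
/- Every composite odd positive number N is expressible by at least one sum of r ≥ 2 successive odd positive numbers, and admits no representation as a sum of r ≥ 2 successive even positive numbers. Moreover, every even number of the form N = 2^(n+1) with n ≥ 1 also has at least one representation as a sum of r ≥ 2 successive odd positive numbers and none as a sum of r ≥ 2 successive even positive numbers. -/
/-!
The sum of `r` successive numbers `a, a + 2, …, a + 2(r - 1)` is `r * (a + (r - 1))`. Hence
`N = r * b` with `2 ≤ r ≤ b` and `r + b` even is such a sum with first term `b - r + 1`, which is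
odd; an odd composite number `p * q` (with `p ≤ q` both odd) and `2 ^ (n + 1) = 2 * 2 ^ n` have
this shape. When `a` is even, the factors `r` and `a + (r - 1)` have opposite parity: their product
is even, and its odd factor exceeds `1`, which rules out a power of two.
-/

open Finset

def IsSumOfSuccessiveOdd (N : ℕ) : Prop :=
  ∃ r a : ℕ, 2 ≤ r ∧ 0 < a ∧ Odd a ∧ N = ∑ i ∈ range r, (a + 2 * i)

def IsSumOfSuccessiveEven (N : ℕ) : Prop :=
  ∃ r a : ℕ, 2 ≤ r ∧ 0 < a ∧ Even a ∧ N = ∑ i ∈ range r, (a + 2 * i)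

theorem sum_range_add_two_mul (r a : ℕ) :
    ∑ i ∈ range r, (a + 2 * i) = r * (a + (r - 1)) := by
  rw [sum_add_distrib, sum_const, card_range, smul_eq_mul, ← mul_sum, mul_add,
    ← sum_range_id_mul_two, mul_comm 2]

theorem isSumOfSuccessiveOdd_mul {r b : ℕ} (hr : 2 ≤ r) (hrb : r ≤ b) (hpar : Even (r + b)) :
    IsSumOfSuccessiveOdd (r * b) := by
  refine ⟨r, b - r + 1, hr, Nat.succ_pos _, ?_, ?_⟩
  · obtain ⟨k, hk⟩ := hpar
    exact ⟨b - k, by omega⟩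
  · rw [sum_range_add_two_mul]
    congr 1
    omega

theorem isSumOfSuccessiveOdd_of_odd_of_not_prime {N : ℕ} (hodd : Odd N) (hN : 1 < N)
    (hnp : ¬ N.Prime) : IsSumOfSuccessiveOdd N := by
  obtain ⟨q, hq⟩ := N.minFac_dvd
  have hp : 2 ≤ N.minFac := (Nat.minFac_prime hN.ne').two_le
  have hpq : N.minFac ≤ q := by
    have hsq := Nat.minFac_sq_le_self (by omega) hnp
    rw [sq] at hsq
    exact Nat.le_of_mul_le_mul_left (hq ▸ hsq) N.minFac_pos
  rw [hq] at hodd ⊢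
  obtain ⟨hpodd, hqodd⟩ := Nat.odd_mul.mp hodd
  exact isSumOfSuccessiveOdd_mul hp hpq (hpodd.add_odd hqodd)

theorem isSumOfSuccessiveOdd_two_pow {n : ℕ} (hn : 1 ≤ n) :
    IsSumOfSuccessiveOdd (2 ^ (n + 1)) := by
  have h2 : 2 ≤ 2 ^ n := Nat.le_self_pow (by omega) 2
  rw [pow_succ']
  exact isSumOfSuccessiveOdd_mul le_rfl h2 (even_two.add (Nat.even_pow.mpr ⟨even_two, by omega⟩))

theorem IsSumOfSuccessiveEven.exists_odd_mul {N : ℕ} (h : IsSumOfSuccessiveEven N) :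
    ∃ d m, Odd d ∧ 3 ≤ d ∧ Even m ∧ N = d * m := by
  obtain ⟨r, a, hr, ha, hae, rfl⟩ := h
  rw [sum_range_add_two_mul]
  obtain ⟨k, rfl⟩ := hae
  rcases Nat.even_or_odd r with ⟨s, hs⟩ | ⟨s, hs⟩
  · exact ⟨k + k + (r - 1), r, ⟨k + s - 1, by omega⟩, by omega, ⟨s, hs⟩, mul_comm _ _⟩
  · exact ⟨r, k + k + (r - 1), ⟨s, hs⟩, by omega, ⟨k + s, by omega⟩, rfl⟩

theorem not_isSumOfSuccessiveEven_of_odd {N : ℕ} (hodd : Odd N) : ¬ IsSumOfSuccessiveEven N := by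
  intro h
  obtain ⟨d, m, -, -, hm, rfl⟩ := h.exists_odd_mul
  exact Nat.not_even_iff_odd.mpr hodd (hm.mul_left d)

theorem not_isSumOfSuccessiveEven_two_pow (n : ℕ) : ¬ IsSumOfSuccessiveEven (2 ^ n) := by
  intro h
  obtain ⟨d, m, hd, hd3, -, hN⟩ := h.exists_odd_mul
  have := Nat.Coprime.eq_one_of_dvd (hd.coprime_two_right.pow_right n) ⟨m, hN⟩
  omega

/-- Composite odd numbers, and even numbers of the form 2^(n+1) with n ≥ 1, are
expressible by sums of r ≥ 2 successive odd positive numbers and by no sum of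
r ≥ 2 successive even positive numbers. -/
theorem composite_odd_and_two_pow_exclusively_odd_sums :
    (∀ N : ℕ, Odd N → 1 < N → ¬ N.Prime →
      (∃ r a : ℕ, 2 ≤ r ∧ 0 < a ∧ Odd a ∧
        N = ∑ i ∈ Finset.range r, (a + 2 * i)) ∧
      ¬ ∃ r a : ℕ, 2 ≤ r ∧ 0 < a ∧ Even a ∧
        N = ∑ i ∈ Finset.range r, (a + 2 * i)) ∧
    (∀ n : ℕ, 1 ≤ n →
      (∃ r a : ℕ, 2 ≤ r ∧ 0 < a ∧ Odd a ∧
        2 ^ (n + 1) = ∑ i ∈ Finset.range r, (a + 2 * i)) ∧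
      ¬ ∃ r a : ℕ, 2 ≤ r ∧ 0 < a ∧ Even a ∧
        2 ^ (n + 1) = ∑ i ∈ Finset.range r, (a + 2 * i)) :=
  ⟨fun _ hodd hN hnp => ⟨isSumOfSuccessiveOdd_of_odd_of_not_prime hodd hN hnp,
      not_isSumOfSuccessiveEven_of_odd hodd⟩,
    fun n hn => ⟨isSumOfSuccessiveOdd_two_pow hn, not_isSumOfSuccessiveEven_two_pow (n + 1)⟩⟩
end

section
/- Let n be a positive integer and p an odd prime with p > 2^n, and let N = 2^(n-1)·p. Then N has exactly one representation as a sum of r ≥ 2 consecutive positive integers, namely the sum of 2^n consecutive positive integers starting at (p+1)/2 - 2^(n-1): N = ∑_{i=0}^{2^n - 1} ((p+1)/2 - 2^(n-1) + i). In particular, the number of terms in this unique representation is even. -/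
/-!
Twice a sum of `r` consecutive integers starting at `a` is `r * (2a + r - 1)`, a product of two
factors of opposite parity with `r` the smaller one. For `2 ^ n * p` with `p` prime, the odd
factor is a divisor of `p` exceeding `1`, hence `p` itself; it cannot be `r`, since the cofactor
would then be the power of two `2 ^ n < p < s`. So `r = 2 ^ n` and `2a + r - 1 = p`.
-/

lemma two_mul_sum_range_add (r a : ℕ) :
    2 * ∑ i ∈ Finset.range r, (a + i) = r * (2 * a + r - 1) := by
  rw [Finset.sum_add_distrib, Finset.sum_const, Finset.card_range, smul_eq_mul, mul_add,
    mul_comm 2 (∑ i ∈ _, i), Finset.sum_range_id_mul_two]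
  cases r with
  | zero => simp
  | succ k => rw [show 2 * a + (k + 1) - 1 = 2 * a + k by omega, Nat.add_sub_cancel]; ring

lemma eq_prime_of_odd_of_dvd_two_pow_mul {n p x : ℕ} (hp : p.Prime) (hx : Odd x) (hx1 : 2 ≤ x)
    (hdvd : x ∣ 2 ^ n * p) : x = p :=
  (hp.eq_one_or_self_of_dvd x
    ((Nat.Coprime.pow_right n hx.coprime_two_right).dvd_of_dvd_mul_left hdvd)).resolve_left
    (by omega)

lemma eq_two_pow_of_mul_eq_two_pow_mul_prime {n p r s : ℕ} (hp : p.Prime) (hgt : 2 ^ n < p)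
    (hr : 2 ≤ r) (hrs : r < s) (hodd : Odd (r + s)) (h : r * s = 2 ^ n * p) :
    r = 2 ^ n ∧ s = p := by
  rcases Nat.even_or_odd r with hr_even | hr_odd
  · have hs_odd : Odd s := (Nat.odd_add'.mp hodd).mpr hr_even
    have hsp : s = p :=
      eq_prime_of_odd_of_dvd_two_pow_mul hp hs_odd (by omega) (Dvd.intro_left r h)
    subst hsp
    exact ⟨Nat.eq_of_mul_eq_mul_right hp.pos h, rfl⟩
  · have hrp : r = p := eq_prime_of_odd_of_dvd_two_pow_mul hp hr_odd hr (Dvd.intro s h)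
    subst hrp
    have : s = 2 ^ n := Nat.eq_of_mul_eq_mul_left hp.pos (h.trans (mul_comm _ _))
    omega

/-- For n ≥ 1 and an odd prime p > 2^n, N = 2^(n-1)·p has exactly one
representation as a sum of r ≥ 2 consecutive positive integers, namely the sum
of 2^n consecutive integers starting at (p+1)/2 - 2^(n-1); the number of
terms is even. -/
theorem large_prime_odd_part_unique_even_length_sum (n p : ℕ) (hn : 0 < n)
    (hp : p.Prime) (hodd : Odd p) (hgt : 2 ^ n < p) :
    0 < (p + 1) / 2 - 2 ^ (n - 1) ∧
    2 ^ (n - 1) * p = ∑ i ∈ Finset.range (2 ^ n), ((p + 1) / 2 - 2 ^ (n - 1) + i) ∧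
    Even (2 ^ n) ∧
    (∀ r a : ℕ, 2 ≤ r → 0 < a →
      2 ^ (n - 1) * p = ∑ i ∈ Finset.range r, (a + i) →
      r = 2 ^ n ∧ a = (p + 1) / 2 - 2 ^ (n - 1)) := by
  have h_pow : 2 * 2 ^ (n - 1) = 2 ^ n := by rw [← pow_succ', Nat.sub_add_cancel hn]
  have h_double : 2 * (2 ^ (n - 1) * p) = 2 ^ n * p := by rw [← mul_assoc, h_pow]
  have h_start : 2 * ((p + 1) / 2 - 2 ^ (n - 1)) + 2 ^ n - 1 = p := by
    obtain ⟨k, rfl⟩ := hodd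
    omega
  refine ⟨by omega, ?_, ⟨2 ^ (n - 1), by omega⟩, fun r a hr ha hsum => ?_⟩
  · have h := two_mul_sum_range_add (2 ^ n) ((p + 1) / 2 - 2 ^ (n - 1))
    rw [h_start] at h
    omega
  · have h : r * (2 * a + r - 1) = 2 ^ n * p := by rw [← two_mul_sum_range_add, ← hsum, h_double]
    obtain ⟨rfl, hs⟩ :=
      eq_two_pow_of_mul_eq_two_pow_mul_prime hp hgt hr (by omega) ⟨a + r - 1, by omega⟩ h
    exact ⟨rfl, by omega⟩
end
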